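/- Let U(y) = (1 + |y|²/24)⁻² and Z(y) = 2U(y) + y·∇U(y) on ℝ⁶. Then there exist C > 0 and r₀ > 0 such that for all r ≥ r₀: | ∫_{{y ∈ ℝ⁶ : |y| > r}} Z(y)² dy − 2 · 24⁴ π³ r⁻² | ≤ C r⁻⁴. -/

import Mathlib

/-!
`Z` is radial, so in polar coordinates the tail is `|S⁵| ∫_r^∞ t⁵ Z(t)² dt` with `|S⁵| = π³`.
Put `b = (1 + t²/24)⁻¹`, so that `U = b²` and `Z = 2b²(2b − 1)`; then
`t⁵ Z(t)² dt = −2·24³ ((1 − b)(1 − 2b))² db`, and the tail equals `2·24³ π³ P(b(r))` for the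
quintic `P(b) = ∫₀ᵇ ((1 − x)(1 − 2x))² dx = b + O(b²)`, while `b(r) = 24/r² + O(r⁻⁴)`.
-/

open MeasureTheory

noncomputable section

/-- `ℝ⁶` as a Euclidean space. -/
abbrev E6 : Type := EuclideanSpace ℝ (Fin 6)

/-- The Aubin–Talenti bubble on `ℝ⁶`: `U(y) = (1 + |y|²/24)⁻²`. -/
def Ubub (y : E6) : ℝ := ((1 + ‖y‖ ^ 2 / 24) ^ 2)⁻¹

/-- The scaling kernel `Z(y) = 2U(y) + y·∇U(y) = (2 − |y|²/12)(1 + |y|²/24)⁻³`. -/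
def Zker (y : E6) : ℝ := (2 - ‖y‖ ^ 2 / 12) * ((1 + ‖y‖ ^ 2 / 24) ^ 3)⁻¹

open Set Filter Topology Metric

theorem MeasureTheory.setIntegral_norm_gt_fun_norm_addHaar {E F : Type*} [NormedAddCommGroup E]
    [NormedSpace ℝ E] [Nontrivial E] [FiniteDimensional ℝ E] [MeasurableSpace E] [BorelSpace E]
    [NormedAddCommGroup F] [NormedSpace ℝ F] (μ : Measure E) [μ.IsAddHaarMeasure]
    (f : ℝ → F) {r : ℝ} (hr : 0 ≤ r) :
    ∫ x in {x : E | r < ‖x‖}, f ‖x‖ ∂μ = Module.finrank ℝ E • μ.real (ball 0 1) •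
      ∫ t in Ioi r, t ^ (Module.finrank ℝ E - 1) • f t := by
  have hS : MeasurableSet {x : E | r < ‖x‖} := measurableSet_lt measurable_const measurable_norm
  rw [← integral_indicator hS]
  have h := integral_fun_norm_addHaar μ ((Ioi r).indicator f)
  have hsmul : ∀ y : ℝ, y ^ (Module.finrank ℝ E - 1) • (Ioi r).indicator f y =
      (Ioi r).indicator (fun t ↦ t ^ (Module.finrank ℝ E - 1) • f t) y :=
    fun y ↦ (indicator_smul_apply (Ioi r) (fun t : ℝ ↦ t ^ (Module.finrank ℝ E - 1)) f y).symm
  simp only [hsmul, setIntegral_indicator measurableSet_Ioi, Ioi_inter_Ioi, sup_of_le_right hr] at h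
  exact h

theorem EuclideanSpace.volume_real_ball_zero_one_fin_two_mul {k : ℕ} (hk : k ≠ 0) :
    volume.real (ball (0 : EuclideanSpace ℝ (Fin (2 * k))) 1) = Real.pi ^ k / k.factorial := by
  have : Nonempty (Fin (2 * k)) := ⟨⟨0, by omega⟩⟩
  rw [measureReal_def, EuclideanSpace.volume_ball, Fintype.card_fin, ENNReal.ofReal_one, one_pow,
    one_mul, ENNReal.toReal_ofReal (by positivity), pow_mul, Real.sq_sqrt Real.pi_pos.le]
  push_cast
  rw [mul_div_cancel_left₀ _ two_ne_zero, Real.Gamma_nat_eq_factorial]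

/-- `∫₀ᵇ ((1 − x)(1 − 2x))² dx`. -/
def tailPoly (b : ℝ) : ℝ := b - 3 * b ^ 2 + 13 / 3 * b ^ 3 - 3 * b ^ 4 + 4 / 5 * b ^ 5

theorem hasDerivAt_tailPoly (b : ℝ) : HasDerivAt tailPoly (((1 - b) * (1 - 2 * b)) ^ 2) b := by
  have h := ((((hasDerivAt_id b).sub ((hasDerivAt_pow 2 b).const_mul 3)).add
    ((hasDerivAt_pow 3 b).const_mul (13 / 3))).sub ((hasDerivAt_pow 4 b).const_mul 3)).add
    ((hasDerivAt_pow 5 b).const_mul (4 / 5))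
  exact h.congr_deriv (by push_cast; ring)

theorem continuous_tailPoly : Continuous tailPoly := by
  unfold tailPoly; fun_prop

theorem abs_tailPoly_sub_self_le {b : ℝ} (hb₀ : 0 ≤ b) (hb₁ : b ≤ 1) :
    |tailPoly b - b| ≤ 12 * b ^ 2 := by
  have h3 : b ^ 3 ≤ b ^ 2 := pow_le_pow_of_le_one hb₀ hb₁ (by norm_num)
  have h4 : b ^ 4 ≤ b ^ 2 := pow_le_pow_of_le_one hb₀ hb₁ (by norm_num)
  have h5 : b ^ 5 ≤ b ^ 2 := pow_le_pow_of_le_one hb₀ hb₁ (by norm_num)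
  rw [tailPoly, abs_le]
  constructor <;> linarith [pow_nonneg hb₀ 3, pow_nonneg hb₀ 4, pow_nonneg hb₀ 5]

/-- `Ubub y = bubbleSqrt ‖y‖ ^ 2`. -/
def bubbleSqrt (t : ℝ) : ℝ := (1 + t ^ 2 / 24)⁻¹

theorem bubbleSqrt_pos (t : ℝ) : 0 < bubbleSqrt t := by unfold bubbleSqrt; positivity

theorem sq_mul_bubbleSqrt (t : ℝ) : t ^ 2 * bubbleSqrt t = 24 * (1 - bubbleSqrt t) := by
  unfold bubbleSqrt; field_simp; ring

theorem bubbleSqrt_le_one (t : ℝ) : bubbleSqrt t ≤ 1 := by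
  nlinarith [sq_mul_bubbleSqrt t, bubbleSqrt_pos t, sq_nonneg t]

theorem hasDerivAt_bubbleSqrt (t : ℝ) :
    HasDerivAt bubbleSqrt (-(t / 12) * bubbleSqrt t ^ 2) t := by
  have h := (((hasDerivAt_pow 2 t).div_const 24).const_add 1).inv (by positivity)
  exact h.congr_deriv (by simp only [bubbleSqrt]; field_simp; ring)

theorem tendsto_bubbleSqrt_atTop : Tendsto bubbleSqrt atTop (𝓝 0) :=
  (tendsto_atTop_add_const_left _ _
    ((tendsto_pow_atTop two_ne_zero).atTop_div_const (by norm_num))).inv_tendsto_atTop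

def Zprofile (t : ℝ) : ℝ := 2 * bubbleSqrt t ^ 2 * (2 * bubbleSqrt t - 1)

theorem Zker_eq_Zprofile (y : E6) : Zker y = Zprofile ‖y‖ := by
  unfold Zker Zprofile bubbleSqrt; field_simp; ring

/-- The substitution `b = bubbleSqrt t`: the identity `t² b = 24 (1 − b)` turns
`t⁵ Z(t)²` into `2304 t b² ((1 − b)(1 − 2b))²`. -/
theorem hasDerivAt_tailPoly_comp_bubbleSqrt (t : ℝ) :
    HasDerivAt (fun t ↦ -(2 * 24 ^ 3) * tailPoly (bubbleSqrt t)) (t ^ 5 * Zprofile t ^ 2) t := by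
  refine (((hasDerivAt_tailPoly _).comp t (hasDerivAt_bubbleSqrt t)).const_mul
    (-(2 * 24 ^ 3))).congr_deriv ?_
  unfold Zprofile
  linear_combination -4 * t * bubbleSqrt t ^ 2 * (2 * bubbleSqrt t - 1) ^ 2 *
    (t ^ 2 * bubbleSqrt t + 24 * (1 - bubbleSqrt t)) * sq_mul_bubbleSqrt t

theorem integral_Ioi_pow_five_mul_Zprofile_sq {r : ℝ} (hr : 0 ≤ r) :
    ∫ t in Ioi r, t ^ 5 * Zprofile t ^ 2 = 2 * 24 ^ 3 * tailPoly (bubbleSqrt r) := by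
  have hlim : Tendsto (fun t ↦ -(2 * 24 ^ 3) * tailPoly (bubbleSqrt t)) atTop (𝓝 0) := by
    simpa [tailPoly] using
      ((continuous_tailPoly.tendsto 0).comp tendsto_bubbleSqrt_atTop).const_mul (-(2 * 24 ^ 3) : ℝ)
  rw [integral_Ioi_of_hasDerivAt_of_nonneg' (fun t _ ↦ hasDerivAt_tailPoly_comp_bubbleSqrt t)
    (fun t ht ↦ by have : 0 ≤ t := hr.trans ht.le; positivity) hlim]
  ring

theorem setIntegral_norm_gt_Zker_sq {r : ℝ} (hr : 0 ≤ r) :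
    ∫ y in {y : E6 | r < ‖y‖}, Zker y ^ 2 = 2 * 24 ^ 3 * Real.pi ^ 3 * tailPoly (bubbleSqrt r) := by
  simp_rw [Zker_eq_Zprofile]
  rw [setIntegral_norm_gt_fun_norm_addHaar volume (fun t ↦ Zprofile t ^ 2) hr,
    finrank_euclideanSpace_fin,
    EuclideanSpace.volume_real_ball_zero_one_fin_two_mul (k := 3) three_ne_zero]
  simp only [smul_eq_mul, nsmul_eq_mul]
  rw [integral_Ioi_pow_five_mul_Zprofile_sq hr]
  norm_num [Nat.factorial]
  ring

theorem div_sq_sub_bubbleSqrt {r : ℝ} (hr : r ≠ 0) :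
    24 / r ^ 2 - bubbleSqrt r = 576 / (r ^ 2 * (r ^ 2 + 24)) := by
  unfold bubbleSqrt; field_simp; ring

theorem abs_tailPoly_bubbleSqrt_sub_le {r : ℝ} (hr : 0 < r) :
    |tailPoly (bubbleSqrt r) - 24 / r ^ 2| ≤ 13 * (576 / r ^ 4) := by
  have hgap := div_sq_sub_bubbleSqrt hr.ne'
  have hgap_nonneg : 0 ≤ 24 / r ^ 2 - bubbleSqrt r := by rw [hgap]; positivity
  have hgap_le : 24 / r ^ 2 - bubbleSqrt r ≤ 576 / r ^ 4 := by
    rw [hgap, show r ^ 4 = r ^ 2 * r ^ 2 by ring]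
    gcongr
    linarith
  have hsq : bubbleSqrt r ^ 2 ≤ 576 / r ^ 4 := by
    calc bubbleSqrt r ^ 2 ≤ (24 / r ^ 2) ^ 2 :=
          pow_le_pow_left₀ (bubbleSqrt_pos r).le (by linarith) 2
      _ = 576 / r ^ 4 := by ring
  calc |tailPoly (bubbleSqrt r) - 24 / r ^ 2|
      ≤ |tailPoly (bubbleSqrt r) - bubbleSqrt r| + |bubbleSqrt r - 24 / r ^ 2| := abs_sub_le _ _ _
    _ ≤ 12 * bubbleSqrt r ^ 2 + 576 / r ^ 4 := by
        gcongr
        · exact abs_tailPoly_sub_self_le (bubbleSqrt_pos r).le (bubbleSqrt_le_one r)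
        · rw [abs_sub_comm, abs_of_nonneg hgap_nonneg]; exact hgap_le
    _ ≤ 13 * (576 / r ^ 4) := by linarith

/-- the tail integral of `Z²` outside the ball of radius `r` equals
`2 · 24⁴ π³ r⁻²` up to an error `O(r⁻⁴)`. -/
theorem tail_integral_Z_sq :
    ∃ C > 0, ∃ r₀ > 0, ∀ r ≥ r₀,
      |(∫ y in {y : E6 | r < ‖y‖}, (Zker y) ^ 2) - 2 * 24 ^ 4 * Real.pi ^ 3 / r ^ 2|
        ≤ C / r ^ 4 := by
  refine ⟨2 * 24 ^ 3 * Real.pi ^ 3 * 13 * 576, by positivity, 1, one_pos, fun r hr ↦ ?_⟩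
  have hr₀ : 0 < r := one_pos.trans_le hr
  have hsplit : (∫ y in {y : E6 | r < ‖y‖}, Zker y ^ 2) - 2 * 24 ^ 4 * Real.pi ^ 3 / r ^ 2 =
      2 * 24 ^ 3 * Real.pi ^ 3 * (tailPoly (bubbleSqrt r) - 24 / r ^ 2) := by
    rw [setIntegral_norm_gt_Zker_sq hr₀.le]; ring
  rw [hsplit, abs_mul, abs_of_pos (by positivity)]
  calc _ ≤ 2 * 24 ^ 3 * Real.pi ^ 3 * (13 * (576 / r ^ 4)) := by
        gcongr; exact abs_tailPoly_bubbleSqrt_sub_le hr₀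
    _ = 2 * 24 ^ 3 * Real.pi ^ 3 * 13 * 576 / r ^ 4 := by ring
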